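/- There is no nonconstant smooth function λ : I → ℝ on an open interval I, with λ nowhere zero, satisfying simultaneously 62 λ λ'' - 109 (λ')² + 192 λ⁴ = 0 and 44 λ² λ''' - 124 λ λ' λ'' + 550 λ⁴ λ' + 18 (λ')³ = 0 on I. -/

import Mathlib

theorem stmt_12 :
    ¬ ∃ (a b : ℝ) (l : ℝ → ℝ), a < b ∧ ContDiff ℝ (⊤ : ℕ∞) l ∧
      (∀ t ∈ Set.Ioo a b, l t ≠ 0) ∧
      (∃ t ∈ Set.Ioo a b, ∃ s ∈ Set.Ioo a b, l t ≠ l s) ∧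
      (∀ t ∈ Set.Ioo a b,
        62 * l t * deriv (deriv l) t - 109 * (deriv l t) ^ 2 + 192 * (l t) ^ 4 = 0) ∧
      (∀ t ∈ Set.Ioo a b,
        44 * (l t) ^ 2 * deriv (deriv (deriv l)) t
          - 124 * l t * deriv l t * deriv (deriv l) t
          + 550 * (l t) ^ 4 * deriv l t + 18 * (deriv l t) ^ 3 = 0) := by
  rintro ⟨a, b, l, hab, hl, hne, ⟨t1, ht1, t2, ht2, hval⟩, he1, he2⟩
  -- differentiability facts
  have hlinf : ContDiff ℝ ((⊤ : ℕ∞) : WithTop ℕ∞) l := hl.of_le (by exact_mod_cast le_top)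
  have hd1 : Differentiable ℝ l := hlinf.differentiable (by simp)
  have hl' : ContDiff ℝ ((⊤ : ℕ∞) : WithTop ℕ∞) (deriv l) := (contDiff_infty_iff_deriv.mp hlinf).2
  have hd2 : Differentiable ℝ (deriv l) := hl'.differentiable (by simp)
  have hl'' : ContDiff ℝ ((⊤ : ℕ∞) : WithTop ℕ∞) (deriv (deriv l)) := (contDiff_infty_iff_deriv.mp hl').2
  have hd3 : Differentiable ℝ (deriv (deriv l)) := hl''.differentiable (by simp)
  -- there is a point in (a,b) where deriv l ≠ 0 (MVT, since l is nonconstant)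
  have hmvt : ∃ t0 ∈ Set.Ioo a b, deriv l t0 ≠ 0 := by
    rcases lt_trichotomy t1 t2 with h | h | h
    · obtain ⟨c, hc, hc'⟩ := exists_deriv_eq_slope l h
        (hd1.continuous.continuousOn) (hd1.differentiableOn)
      refine ⟨c, ⟨lt_trans ht1.1 hc.1, lt_trans hc.2 ht2.2⟩, ?_⟩
      rw [hc']
      exact div_ne_zero (sub_ne_zero.mpr (Ne.symm hval)) (sub_ne_zero.mpr h.ne')
    · exact absurd (by rw [h]) hval
    · obtain ⟨c, hc, hc'⟩ := exists_deriv_eq_slope l h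
        (hd1.continuous.continuousOn) (hd1.differentiableOn)
      refine ⟨c, ⟨lt_trans ht2.1 hc.1, lt_trans hc.2 ht1.2⟩, ?_⟩
      rw [hc']
      exact div_ne_zero (sub_ne_zero.mpr hval) (sub_ne_zero.mpr h.ne')
  obtain ⟨t0, ht0, hp0⟩ := hmvt
  -- a small open interval around t0 where deriv l ≠ 0
  have hopen : IsOpen (Set.Ioo a b ∩ {x | deriv l x ≠ 0}) :=
    isOpen_Ioo.inter (isOpen_compl_singleton.preimage hd2.continuous)
  obtain ⟨ε, hε, hball⟩ := Metric.isOpen_iff.mp hopen t0 ⟨ht0, hp0⟩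
  rw [Real.ball_eq_Ioo] at hball
  set c := t0 - ε with hc
  set d := t0 + ε with hd
  have hcd : t0 ∈ Set.Ioo c d := by constructor <;> · simp only [hc, hd]; linarith
  have hsub : Set.Ioo c d ⊆ Set.Ioo a b := fun x hx => (hball hx).1
  have hpne : ∀ t ∈ Set.Ioo c d, deriv l t ≠ 0 := fun x hx => (hball hx).2
  -- derivative of equation 1 on (a,b)
  have he3 : ∀ t ∈ Set.Ioo a b,
      62 * (deriv l t * deriv (deriv l) t + l t * deriv (deriv (deriv l)) t)
        - 109 * (2 * deriv l t * deriv (deriv l) t)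
        + 192 * (4 * (l t) ^ 3 * deriv l t) = 0 := by
    intro t ht
    have hx := (hd1 t).hasDerivAt
    have hp := (hd2 t).hasDerivAt
    have hq := (hd3 t).hasDerivAt
    have hF : HasDerivAt
        (fun s => 62 * l s * deriv (deriv l) s - 109 * (deriv l s) ^ 2 + 192 * (l s) ^ 4)
        ((62 * deriv l t * deriv (deriv l) t + 62 * l t * deriv (deriv (deriv l)) t)
          - 109 * (2 * deriv l t ^ (2 - 1) * deriv (deriv l) t)
          + 192 * (4 * l t ^ (4 - 1) * deriv l t)) t := by
      exact (((hx.const_mul (62 : ℝ)).mul hq).sub ((hp.pow 2).const_mul 109)).add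
        ((hx.pow 4).const_mul 192)
    have hzero : deriv
        (fun s => 62 * l s * deriv (deriv l) s - 109 * (deriv l s) ^ 2 + 192 * (l s) ^ 4) t = 0 := by
      have hev : (fun s => 62 * l s * deriv (deriv l) s - 109 * (deriv l s) ^ 2 + 192 * (l s) ^ 4)
          =ᶠ[nhds t] (fun _ => (0 : ℝ)) :=
        Filter.eventuallyEq_of_mem (isOpen_Ioo.mem_nhds ht) he1
      rw [hev.deriv_eq]
      simp
    rw [hF.deriv] at hzero
    linear_combination hzero
  -- first-order relation on (c,d)
  have hg : ∀ t ∈ Set.Ioo c d, 5156 * (deriv l t) ^ 2 - 44326 * (l t) ^ 4 = 0 := by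
    intro t ht
    have e1 := he1 t (hsub ht)
    have e2 := he2 t (hsub ht)
    have e3 := he3 t (hsub ht)
    have hp := hpne t ht
    have hA : deriv l t * (206 * l t * deriv (deriv l) t - 77 * (l t) ^ 4
        - 279 * (deriv l t) ^ 2) = 0 := by
      linear_combination (11 * l t) * e3 - (31 / 2 : ℝ) * e2
    have hA0 : 206 * l t * deriv (deriv l) t - 77 * (l t) ^ 4 - 279 * (deriv l t) ^ 2 = 0 :=
      (mul_eq_zero.mp hA).resolve_left hp
    linear_combination (-206 : ℝ) * e1 + 62 * hA0
  -- differentiate the first-order relation at t0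
  have hx := (hd1 t0).hasDerivAt
  have hp := (hd2 t0).hasDerivAt
  have hG : HasDerivAt (fun s => 5156 * (deriv l s) ^ 2 - 44326 * (l s) ^ 4)
      (5156 * (2 * deriv l t0 ^ (2 - 1) * deriv (deriv l) t0)
        - 44326 * (4 * l t0 ^ (4 - 1) * deriv l t0)) t0 :=
    ((hp.pow 2).const_mul 5156).sub ((hx.pow 4).const_mul 44326)
  have hGzero : deriv (fun s => 5156 * (deriv l s) ^ 2 - 44326 * (l s) ^ 4) t0 = 0 := by
    have hev : (fun s => 5156 * (deriv l s) ^ 2 - 44326 * (l s) ^ 4)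
        =ᶠ[nhds t0] (fun _ => (0 : ℝ)) :=
      Filter.eventuallyEq_of_mem (isOpen_Ioo.mem_nhds hcd) hg
    rw [hev.deriv_eq]
    simp
  rw [hG.deriv] at hGzero
  -- final contradiction at t0
  have e1 := he1 t0 ht0
  have g0 := hg t0 hcd
  have hx0 := hne t0 ht0
  -- from hGzero and deriv l t0 ≠ 0 : 10312 * q = 177304 * x^3
  have hq0 : deriv l t0 * (10312 * deriv (deriv l) t0 - 177304 * (l t0) ^ 3) = 0 := by
    linear_combination hGzero
  have hq1 : 10312 * deriv (deriv l) t0 - 177304 * (l t0) ^ 3 = 0 :=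
    (mul_eq_zero.mp hq0).resolve_left hp0
  have hfinal : (3309684 : ℝ) * (l t0) ^ 4 = 0 := by
    linear_combination (10312 : ℝ) * e1 - (62 * l t0) * hq1 + (218 : ℝ) * g0
  have : (l t0) ^ 4 = 0 := by linarith
  exact hx0 (by nlinarith [pow_eq_zero_iff (n := 4) (by norm_num) |>.mp this])
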